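/- arXiv:math/9904019 — 5 statements merged into one kernel-verified Lean document; each statement's English description precedes it below -/
import Mathlib

section
/- For any three complex numbers a, b, c there exist matrices A, B ∈ SL(2, ℂ) such that tr(A) = a, tr(B) = b, and tr(A·B) = c. -/
/-!
With `A = !![a, -1; 1, 0]` and `B = !![0, u; -u⁻¹, b]` the product `A * B = !![u⁻¹, a * u - b; 0, u]`
is upper triangular, so `tr (A * B) = u + u⁻¹`. Over an algebraically closed field every `c` has
this form: take `u` a root of `X ^ 2 - c * X + 1`, which is nonzero since the constant term is `1`.
-/

open Matrix Polynomial

open scoped MatrixGroups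

theorem IsAlgClosed.exists_add_inv_eq {K : Type*} [Field K] [IsAlgClosed K] (c : K) :
    ∃ u : Kˣ, (u : K) + ↑u⁻¹ = c := by
  have hdeg : (X ^ 2 - C c * X + 1 : K[X]).degree = 2 := by compute_degree!
  obtain ⟨x, hx⟩ := IsAlgClosed.exists_root _ (by rw [hdeg]; decide)
  simp only [IsRoot, eval_add, eval_sub, eval_pow, eval_mul, eval_X, eval_C, eval_one] at hx
  have hx0 : x ≠ 0 := by rintro rfl; simp at hx
  refine ⟨Units.mk0 x hx0, ?_⟩
  simp only [Units.val_inv_eq_inv_val, Units.val_mk0]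
  field_simp
  linear_combination hx

theorem Matrix.SpecialLinearGroup.exists_traces_eq_add_inv {R : Type*} [CommRing R] (a b : R) (u : Rˣ) :
    ∃ A B : SL(2, R), trace (A : Matrix (Fin 2) (Fin 2) R) = a ∧
      trace (B : Matrix (Fin 2) (Fin 2) R) = b ∧
      trace ((A * B : SL(2, R)) : Matrix (Fin 2) (Fin 2) R) = u + ↑u⁻¹ := by
  let A : SL(2, R) := ⟨!![a, -1; 1, 0], by simp [det_fin_two_of]⟩
  let B : SL(2, R) := ⟨!![0, ↑u; -↑u⁻¹, b], by simp [det_fin_two_of]⟩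
  refine ⟨A, B, ?_, ?_, ?_⟩
  · simp [A, trace_fin_two_of]
  · simp [B, trace_fin_two_of]
  · show trace ((A : Matrix (Fin 2) (Fin 2) R) * (B : Matrix (Fin 2) (Fin 2) R)) = _
    simp [A, B, trace_fin_two_of, add_comm]

theorem sl2_trace_realization (a b c : ℂ) :
    ∃ A B : Matrix.SpecialLinearGroup (Fin 2) ℂ,
      Matrix.trace (A : Matrix (Fin 2) (Fin 2) ℂ) = a ∧
      Matrix.trace (B : Matrix (Fin 2) (Fin 2) ℂ) = b ∧
      Matrix.trace ((A * B : Matrix.SpecialLinearGroup (Fin 2) ℂ) : Matrix (Fin 2) (Fin 2) ℂ) = c := by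
  obtain ⟨u, rfl⟩ := IsAlgClosed.exists_add_inv_eq c
  exact Matrix.SpecialLinearGroup.exists_traces_eq_add_inv a b u
end

section
/- For any A₁, A₂, A₃ ∈ SL(2, ℂ), setting aᵢ = tr(Aᵢ), a_{ij} = tr(Aᵢ·Aⱼ), and a₁₂₃ = tr(A₁·A₂·A₃), the following polynomial relation holds: a₁₂₃² - a₁₂₃·(a₁·a₂₃ + a₂·a₃₁ + a₃·a₁₂ - a₁·a₂·a₃) + a₁² + a₂² + a₃² + a₁₂² + a₂₃² + a₃₁² + a₁₂·a₂₃·a₃₁ - a₁·a₂·a₁₂ - a₂·a₃·a₂₃ - a₃·a₁·a₃₁ - 4 = 0. -/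
/-!
The traces `x = tr (A₁ A₂ A₃)` and `y = tr (A₁ A₃ A₂)` of the two cyclic orders are the roots of
`T² - s T + p`, where `s` is the bracket multiplying `a₁₂₃` in the relation and `p` is the rest of
it; the relation is `x² - s x + p = x² - (x + y) x + x y = 0`.
The formulas for `x + y` and `x y` are polynomial identities in the entries; once the product
formula is made homogeneous by weighting its terms with the determinants `det Aᵢ`, both hold for
all `2 × 2` matrices over any commutative ring.
-/

namespace Matrix

variable {R : Type*} [CommRing R]

theorem trace_mul_mul_add_trace_mul_mul_fin_two (A B C : Matrix (Fin 2) (Fin 2) R) :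
    trace (A * B * C) + trace (A * C * B) =
      trace A * trace (B * C) + trace B * trace (C * A) + trace C * trace (A * B) -
        trace A * trace B * trace C := by
  simp only [trace_fin_two, mul_apply, Fin.sum_univ_two]
  ring

theorem trace_mul_mul_mul_trace_mul_mul_fin_two (A B C : Matrix (Fin 2) (Fin 2) R) :
    trace (A * B * C) * trace (A * C * B) =
      trace A ^ 2 * det B * det C + trace B ^ 2 * det A * det C + trace C ^ 2 * det A * det B +
        trace (A * B) ^ 2 * det C + trace (B * C) ^ 2 * det A + trace (C * A) ^ 2 * det B +
        trace (A * B) * trace (B * C) * trace (C * A) -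
        trace A * trace B * trace (A * B) * det C - trace B * trace C * trace (B * C) * det A -
        trace C * trace A * trace (C * A) * det B - 4 * det A * det B * det C := by
  simp only [trace_fin_two, det_fin_two, mul_apply, Fin.sum_univ_two]
  ring

theorem fricke_vogt_relation_fin_two {A B C : Matrix (Fin 2) (Fin 2) R} (hA : det A = 1)
    (hB : det B = 1) (hC : det C = 1) :
    trace (A * B * C) ^ 2 - trace (A * B * C) * (trace A * trace (B * C) +
        trace B * trace (C * A) + trace C * trace (A * B) - trace A * trace B * trace C) +
      trace A ^ 2 + trace B ^ 2 + trace C ^ 2 +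
      trace (A * B) ^ 2 + trace (B * C) ^ 2 + trace (C * A) ^ 2 +
      trace (A * B) * trace (B * C) * trace (C * A) - trace A * trace B * trace (A * B) -
      trace B * trace C * trace (B * C) - trace C * trace A * trace (C * A) - 4 = 0 := by
  have hprod := trace_mul_mul_mul_trace_mul_mul_fin_two A B C
  rw [hA, hB, hC] at hprod
  linear_combination trace (A * B * C) * trace_mul_mul_add_trace_mul_mul_fin_two A B C - hprod

end Matrix

theorem sl2_fricke_vogt_relation (A₁ A₂ A₃ : Matrix.SpecialLinearGroup (Fin 2) ℂ) :
    let t : Matrix.SpecialLinearGroup (Fin 2) ℂ → ℂ :=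
      fun M => Matrix.trace (M : Matrix (Fin 2) (Fin 2) ℂ)
    let a₁ := t A₁; let a₂ := t A₂; let a₃ := t A₃
    let a₁₂ := t (A₁ * A₂); let a₂₃ := t (A₂ * A₃); let a₃₁ := t (A₃ * A₁)
    let a₁₂₃ := t (A₁ * A₂ * A₃)
    a₁₂₃ ^ 2 - a₁₂₃ * (a₁ * a₂₃ + a₂ * a₃₁ + a₃ * a₁₂ - a₁ * a₂ * a₃) +
      a₁ ^ 2 + a₂ ^ 2 + a₃ ^ 2 + a₁₂ ^ 2 + a₂₃ ^ 2 + a₃₁ ^ 2 + a₁₂ * a₂₃ * a₃₁ -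
      a₁ * a₂ * a₁₂ - a₂ * a₃ * a₂₃ - a₃ * a₁ * a₃₁ - 4 = 0 :=
  Matrix.fricke_vogt_relation_fin_two A₁.2 A₂.2 A₃.2
end

section
/- The principal congruence subgroup of level 2 in SL(2, ℤ), consisting of matrices congruent to the identity modulo 2, contains the matrices T = [[1,2],[0,1]] and S = [[1,0],[-2,1]], and every matrix in it with ±identity quotiented out lies in the subgroup generated by T, S and -I; in particular T and S generate a free group of rank 2 in PSL(2, ℤ). -/
open Matrix MatrixGroups

open scoped LinearAlgebra.Projectivization Pointwise

/-!
Freeness is a ping-pong argument on the projective line over an ordered field. In the coordinate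
`r = x / y`, `T` acts by `r ↦ r + 2` and `S` by `1 / r ↦ 1 / r - 2`, so `T` maps the complement
of `(-∞, -1)` onto `[1, ∞]` and `S` maps the complement of `(0, 1)` onto `[-1, 0]`; these four
sets are disjoint. Over `ℤ` one maps `PSL(2, ℤ)` into `PSL(2, ℚ)`.

Generation is a Euclidean algorithm on the first column `(a, c)` of a matrix of `Γ(2)`: `a` is odd
and `c` even, so `|a| ≠ |c|`, and multiplying on the left by `T^{±1}` or `S^{±1}` shrinks the
larger of the two. When `c = 0` the matrix is `±T^m`.
-/

namespace Matrix.SpecialLinearGroup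

variable {ι R S : Type*} [DecidableEq ι] [Fintype ι] [CommRing R] [CommRing S]

lemma transvection_zpow {i j : ι} (hij : i ≠ j) (b : R) (n : ℤ) :
    transvection hij b ^ n = transvection hij (n * b) := by
  induction n using Int.induction_on with
  | zero => simp [transvection_coeff_zero]
  | succ n ih => rw [_root_.zpow_add_one, ih, ← transvection_add]; push_cast; ring_nf
  | pred n ih =>
    rw [_root_.zpow_sub_one, ih, transvection_inv, ← transvection_add]; push_cast; ring_nf

lemma coe_transvection_eq_transvection {i j : ι} (hij : i ≠ j) (b : R) :
    (transvection hij b : Matrix ι ι R) = Matrix.transvection i j b :=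
  rfl

lemma map_transvection (f : R →+* S) {i j : ι} (hij : i ≠ j) (b : R) :
    map f (transvection hij b) = transvection hij (f b) := by
  ext k l
  simp [transvection_coe, Matrix.single_apply, Matrix.one_apply, apply_ite f]

lemma map_mem_center (f : R →+* S) {A : SpecialLinearGroup ι R}
    (hA : A ∈ Subgroup.center (SpecialLinearGroup ι R)) :
    map f A ∈ Subgroup.center (SpecialLinearGroup ι S) := by
  obtain ⟨r, hr, hrA⟩ := mem_center_iff.1 hA
  refine mem_center_iff.2 ⟨f r, by rw [← map_pow, hr, map_one], ?_⟩
  ext k l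
  simp [← hrA, Matrix.scalar_apply, Matrix.diagonal_apply, apply_ite f]

end Matrix.SpecialLinearGroup

namespace Matrix.ProjectiveSpecialLinearGroup

variable {ι R S : Type*} [DecidableEq ι] [Fintype ι] [CommRing R] [CommRing S]

def map (f : R →+* S) :
    ProjectiveSpecialLinearGroup ι R →* ProjectiveSpecialLinearGroup ι S :=
  QuotientGroup.map _ _ (SpecialLinearGroup.map f) fun _ ↦ SpecialLinearGroup.map_mem_center f

@[simp]
lemma map_mk (f : R →+* S) (A : SpecialLinearGroup ι R) :
    map f (A : ProjectiveSpecialLinearGroup ι R) = SpecialLinearGroup.map f A :=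
  rfl

end Matrix.ProjectiveSpecialLinearGroup

namespace Projectivization

variable {K V : Type*} [Field K] [LinearOrder K] [IsStrictOrderedRing K] [AddCommGroup V]
  [Module K V]

def quadSign (Q : QuadraticForm K V) : ℙ K V → SignType :=
  Projectivization.lift (fun v ↦ SignType.sign (Q v)) fun v w t hvw ↦ by
    have ht : t ≠ 0 := by rintro rfl; exact v.2 (by rw [hvw, zero_smul])
    rw [hvw, QuadraticMap.map_smul, smul_eq_mul, sign_mul, sign_pos (mul_self_pos.2 ht), one_mul]

@[simp]
lemma quadSign_mk (Q : QuadraticForm K V) {v : V} (hv : v ≠ 0) :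
    quadSign Q (mk K v hv) = SignType.sign (Q v) :=
  rfl

end Projectivization

lemma smul_compl_subset_and_inv_smul_compl_subset {G α : Type*} [Group G] [MulAction G α]
    {g : G} {X Y : Set α} (h : ∀ p, g • p ∈ X ↔ p ∉ Y) :
    g • Yᶜ ⊆ X ∧ g⁻¹ • Xᶜ ⊆ Y := by
  constructor
  · rintro _ ⟨p, hp, rfl⟩
    exact (h p).2 hp
  · rintro _ ⟨p, hp, rfl⟩
    by_contra hq
    exact hp (by simpa using (h (g⁻¹ • p)).2 hq)

section Sanov

open SpecialLinearGroup

variable (R : Type*) [CommRing R]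

def sanovT : SL(2, R) :=
  transvection (i := 0) (j := 1) (by decide) 2

def sanovS : SL(2, R) :=
  transvection (i := 1) (j := 0) (by decide) (-2)

variable {R}

lemma map_sanovT {S : Type*} [CommRing S] (f : R →+* S) : map f (sanovT R) = sanovT S := by
  simp [sanovT, map_transvection, map_ofNat]

lemma map_sanovS {S : Type*} [CommRing S] (f : R →+* S) : map f (sanovS R) = sanovS S := by
  simp [sanovS, map_transvection, map_ofNat]

lemma sanovT_smul (v : Fin 2 → R) : sanovT R • v = ![v 0 + 2 * v 1, v 1] := by
  rw [Matrix.SpecialLinearGroup.smul_def]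
  ext i
  fin_cases i <;> simp [sanovT, transvection_coe, Matrix.add_mulVec, Matrix.single_mulVec]

lemma sanovS_smul (v : Fin 2 → R) : sanovS R • v = ![v 0, v 1 - 2 * v 0] := by
  rw [Matrix.SpecialLinearGroup.smul_def]
  ext i
  fin_cases i <;> simp [sanovS, transvection_coe, Matrix.add_mulVec, Matrix.single_mulVec]
  ring

end Sanov

section OrderedField

open Projectivization QuadraticMap

-- `Type`, not `Type*`: the ping-pong lemma wants the group in the universe of the index `Bool`.
variable (K : Type) [Field K] [LinearOrder K] [IsStrictOrderedRing K]

local notation "x" => LinearMap.proj (R := K) (φ := fun _ : Fin 2 ↦ K) 0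
local notation "y" => LinearMap.proj (R := K) (φ := fun _ : Fin 2 ↦ K) 1

/-- In the coordinate `r = x / y`, the intervals `[1, ∞]` and `[-1, 0]`. -/
def sanovPing : Bool → Set (ℙ K (Fin 2 → K))
  | true => {p | quadSign (linMulLin y (y - x)) p ≤ 0}
  | false => {p | quadSign (linMulLin x (x + y)) p ≤ 0}

/-- In the coordinate `r = x / y`, the intervals `(-∞, -1)` and `(0, 1)`. -/
def sanovPong : Bool → Set (ℙ K (Fin 2 → K))
  | true => {p | quadSign (linMulLin y (x + y)) p = -1}
  | false => {p | quadSign (linMulLin x (x - y)) p = -1}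

variable {K}

lemma smul_mem_sanovPing_iff (b : Bool) (p : ℙ K (Fin 2 → K)) :
    (if b then (sanovT K : PSL(2, K)) else sanovS K) • p ∈ sanovPing K b ↔
      p ∉ sanovPong K b := by
  induction p using Projectivization.ind with | _ v hv => ?_
  cases b <;>
    simp [sanovPing, sanovPong, sign_eq_neg_one_iff, ProjectiveSpecialLinearGroup.smul_proj_mk,
      sanovT_smul, sanovS_smul] <;>
    constructor <;> intro h <;> linarith

lemma sq_add_sq_pos_of_ne_zero {v : Fin 2 → K} (hv : v ≠ 0) : 0 < v 0 ^ 2 + v 1 ^ 2 := by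
  contrapose! hv
  ext i
  fin_cases i <;> simp <;> nlinarith [sq_nonneg (v 0), sq_nonneg (v 1)]

variable (K) in
theorem injective_lift_sanov :
    Function.Injective (FreeGroup.lift fun b : Bool ↦
      if b then (sanovT K : PSL(2, K)) else sanovS K) := by
  have hXY := fun b ↦
    smul_compl_subset_and_inv_smul_compl_subset (smul_mem_sanovPing_iff (K := K) b)
  refine FreeGroup.injective_lift_of_ping_pong
    (fun b : Bool ↦ if b then (sanovT K : PSL(2, K)) else sanovS K) (sanovPing K) (sanovPong K)
    ?_ (pairwise_disjoint_on_bool.2 ?_) (pairwise_disjoint_on_bool.2 ?_) (fun i j ↦ ?_)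
    (fun b ↦ (hXY b).1) (fun b ↦ (hXY b).2)
  · rintro (_ | _)
    · exact ⟨mk K ![0, 1] (by simp), by simp [sanovPing]⟩
    · exact ⟨mk K ![1, 0] (by simp), by simp [sanovPing]⟩
  all_goals
    refine Set.disjoint_left.2 (Projectivization.ind fun v hv ↦ ?_)
    have := sq_add_sq_pos_of_ne_zero hv
  any_goals cases i <;> cases j
  all_goals simp [sanovPing, sanovPong, sign_eq_neg_one_iff]; intros; nlinarith

end OrderedField

theorem injective_lift_sanov_of_ringHom {R K : Type} [CommRing R] [Field K] [LinearOrder K]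
    [IsStrictOrderedRing K] (f : R →+* K) :
    Function.Injective (FreeGroup.lift fun b : Bool ↦
      if b then (sanovT R : PSL(2, R)) else sanovS R) := by
  refine Function.Injective.of_comp (f := ProjectiveSpecialLinearGroup.map f) ?_
  rw [← MonoidHom.coe_comp]
  convert injective_lift_sanov K using 2
  ext (_ | _) <;> simp [map_sanovT, map_sanovS]

lemma Int.exists_natAbs_lt_of_odd_of_even {a c : ℤ} (ha : Odd a) (hc : Even c) (hc0 : c ≠ 0) :
    ∃ n : ℤ, (a + n * 2 * c).natAbs < a.natAbs ∨ (c - n * 2 * a).natAbs < c.natAbs := by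
  obtain ⟨k, rfl⟩ := ha
  obtain ⟨l, rfl⟩ := hc
  by_contra! h
  have := h 1
  have := h (-1)
  omega

section Gamma2

open CongruenceSubgroup SpecialLinearGroup

local notation "𝓗" => Subgroup.closure {sanovT ℤ, sanovS ℤ, (-1 : SL(2, ℤ))}

lemma sanovT_mem_Gamma_two : sanovT ℤ ∈ Gamma 2 := by
  simp [sanovT, transvection_coe]
  decide

lemma sanovS_mem_Gamma_two : sanovS ℤ ∈ Gamma 2 := by
  simp [sanovS, transvection_coe]
  decide

lemma mem_Gamma_two_iff {A : SL(2, ℤ)} :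
    A ∈ Gamma 2 ↔ Odd (A 0 0) ∧ Even (A 0 1) ∧ Even (A 1 0) ∧ Odd (A 1 1) := by
  simp [ZMod.intCast_eq_one_iff_odd, ZMod.intCast_eq_zero_iff_even]

lemma mem_closure_of_mem_Gamma_two_of_lower_left_eq_zero {A : SL(2, ℤ)} (hA : A ∈ Gamma 2)
    (hc : A 1 0 = 0) : A ∈ 𝓗 := by
  obtain ⟨-, ⟨m, hm⟩, -, -⟩ := mem_Gamma_two_iff.1 hA
  have had : A 0 0 * A 1 1 = 1 := by
    have := A.det_coe
    rw [det_fin_two, hc] at this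
    linarith
  have hT : sanovT ℤ ∈ 𝓗 := Subgroup.subset_closure (by simp)
  have hN : -1 ∈ 𝓗 := Subgroup.subset_closure (by simp)
  rcases Int.eq_one_or_neg_one_of_mul_eq_one' had with ⟨ha, hd⟩ | ⟨ha, hd⟩
  · have : A = sanovT ℤ ^ m := by
      rw [sanovT, transvection_zpow]
      ext i j
      fin_cases i <;> fin_cases j <;> simp [transvection_coe, ha, hd, hc, hm, mul_two]
    rw [this]
    exact zpow_mem hT m
  · have : A = -1 * sanovT ℤ ^ (-m) := by
      rw [sanovT, transvection_zpow]
      ext i j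
      fin_cases i <;> fin_cases j <;> simp [transvection_coe, ha, hd, hc, hm, mul_two]
    rw [this]
    exact mul_mem hN (zpow_mem hT _)

theorem Gamma_two_le_closure : Gamma 2 ≤ 𝓗 := by
  have hT : sanovT ℤ ∈ 𝓗 := Subgroup.subset_closure (by simp)
  have hS : sanovS ℤ ∈ 𝓗 := Subgroup.subset_closure (by simp)
  suffices ∀ N, ∀ A ∈ Gamma 2, (A 0 0).natAbs + (A 1 0).natAbs = N → A ∈ 𝓗 from
    fun A hA ↦ this _ A hA rfl
  intro N
  induction N using Nat.strong_induction_on with | _ N ih => ?_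
  rintro A hA rfl
  by_cases hc : A 1 0 = 0
  · exact mem_closure_of_mem_Gamma_two_of_lower_left_eq_zero hA hc
  obtain ⟨ha, -, hc2, -⟩ := mem_Gamma_two_iff.1 hA
  obtain ⟨n, hn | hn⟩ := Int.exists_natAbs_lt_of_odd_of_even ha hc2 hc
  · have h := ih _ ?_ _ (mul_mem (zpow_mem sanovT_mem_Gamma_two n) hA) rfl
    · simpa using mul_mem (zpow_mem hT (-n)) h
    · simp [sanovT, transvection_zpow, coe_transvection_eq_transvection,
        Matrix.transvection_mul_apply_same, Matrix.transvection_mul_apply_of_ne]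
      omega
  · have h := ih _ ?_ _ (mul_mem (zpow_mem sanovS_mem_Gamma_two n) hA) rfl
    · simpa using mul_mem (zpow_mem hS (-n)) h
    · simp [sanovS, transvection_zpow, coe_transvection_eq_transvection,
        Matrix.transvection_mul_apply_same, Matrix.transvection_mul_apply_of_ne]
      omega

end Gamma2

theorem congruence_subgroup_level_two_free :
    let Γ₂ : Subgroup (Matrix.SpecialLinearGroup (Fin 2) ℤ) :=
      (Matrix.SpecialLinearGroup.map (Int.castRingHom (ZMod 2))).ker
    let T : Matrix.SpecialLinearGroup (Fin 2) ℤ := ⟨!![1, 2; 0, 1], by decide⟩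
    let S : Matrix.SpecialLinearGroup (Fin 2) ℤ := ⟨!![1, 0; -2, 1], by decide⟩
    let π : Matrix.SpecialLinearGroup (Fin 2) ℤ →*
        Matrix.ProjectiveSpecialLinearGroup (Fin 2) ℤ :=
      QuotientGroup.mk' (Subgroup.center (Matrix.SpecialLinearGroup (Fin 2) ℤ))
    T ∈ Γ₂ ∧ S ∈ Γ₂ ∧
    (Γ₂ ≤ Subgroup.closure {T, S, -1}) ∧
    Function.Injective
      (FreeGroup.lift (fun b : Bool => if b then π T else π S) :
        FreeGroup Bool →* Matrix.ProjectiveSpecialLinearGroup (Fin 2) ℤ) := by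
  intro Γ₂ T S π
  have hT : T = sanovT ℤ := by
    ext i j
    fin_cases i <;> fin_cases j <;> simp [T, sanovT, SpecialLinearGroup.transvection_coe]
  have hS : S = sanovS ℤ := by
    ext i j
    fin_cases i <;> fin_cases j <;> simp [S, sanovS, SpecialLinearGroup.transvection_coe]
  rw [hT, hS]
  exact ⟨sanovT_mem_Gamma_two, sanovS_mem_Gamma_two, Gamma_two_le_closure,
    injective_lift_sanov_of_ringHom (Int.castRingHom ℚ)⟩
end

section
/- Let t : ℚ ∪ {∞} → ℝ_{≥2} arise as a trace function on the set of simple closed curves on the one-holed torus with boundary trace β ≥ 2, i.e., suppose x = t(α₁), y = t(α₂), z = t(α₃) are reals ≥ 2 satisfying x·y·z = x² + y² + z² + β - 2 for some β ≥ 2. Then the other solution z' of the quadratic w² - x·y·w + x² + y² + β - 2 = 0 satisfies z + z' = x·y and z·z' = x² + y² + β - 2, and z' is also a real number ≥ 2. -/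
theorem mul_eq_of_mul_eq_sq_add_of_add_eq {R : Type*} [CommRing R] {s p z z' : R}
    (hroot : s * z = z ^ 2 + p) (hsum : z + z' = s) : z * z' = p := by
  linear_combination hroot + z * hsum

theorem fricke_quadratic_other_root_general (x y z β z' : ℝ)
    (hz : 2 ≤ z) (hβ : 2 ≤ β)
    (hfricke : x * y * z = x ^ 2 + y ^ 2 + z ^ 2 + β - 2)
    (hz' : z + z' = x * y) :
    z * z' = x ^ 2 + y ^ 2 + β - 2 ∧ 2 ≤ z' := by
  have hprod : z * z' = x ^ 2 + y ^ 2 + β - 2 :=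
    mul_eq_of_mul_eq_sq_add_of_add_eq (by linear_combination hfricke) hz'
  refine ⟨hprod, ?_⟩
  have hshift : (z - 2) * (z' - 2) = (x - y) ^ 2 + (β + 2) := by
    linear_combination hprod - 2 * hz'
  have hpos : 0 < (z - 2) * (z' - 2) := by
    rw [hshift]
    linarith [sq_nonneg (x - y)]
  linarith [pos_of_mul_pos_right hpos (sub_nonneg.2 hz)]

theorem fricke_quadratic_other_root (x y z β z' : ℝ)
    (hx : 2 ≤ x) (hy : 2 ≤ y) (hz : 2 ≤ z) (hβ : 2 ≤ β)
    (hfricke : x * y * z = x ^ 2 + y ^ 2 + z ^ 2 + β - 2)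
    (hz' : z + z' = x * y) :
    z * z' = x ^ 2 + y ^ 2 + β - 2 ∧ 2 ≤ z' :=
  fricke_quadratic_other_root_general x y z β z' hz hβ hfricke hz'
end

section
/- Suppose f(α₁), f(α₂), f(α₃) are nonnegative reals satisfying the tropical Fricke relation f(α₁) + f(α₂) + f(α₃) = max(2·f(α₁), 2·f(α₂), 2·f(α₃), c) for a nonnegative real c (intersection with the boundary of the one-holed torus), and define f(α₃') by f(α₃) + f(α₃') = max(2·f(α₁), 2·f(α₂), c). Then f(α₃') is nonnegative and the triple (f(α₁), f(α₂), f(α₃')) again satisfies f(α₁) + f(α₂) + f(α₃') = max(2·f(α₁), 2·f(α₂), 2·f(α₃'), c). -/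
/-!
Write `M = max (2a, 2b, c)` and `s = a + b`. Since `c₃ + c₃' = M`, we have
`max (M, 2c₃) = c₃ + max (c₃, c₃')`, so the tropical Fricke relation `s + c₃ = max (M, 2c₃)`
says exactly `s = max (c₃, c₃')`, which is symmetric in `c₃` and `c₃'`. Nonnegativity of `c₃'`
follows from `min (c₃, c₃') = M - s ≥ 0`, as `s ≤ max (2a, 2b)`.
-/

section TropicalFricke

variable {α : Type*} [AddCommGroup α] [LinearOrder α] [IsOrderedAddMonoid α]

theorem add_eq_max_add_self_iff_eq_max {s M x x' : α} (h : x + x' = M) :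
    s + x = max M (x + x) ↔ s = max x x' := by
  rw [← h, max_add_add_left, add_comm s, add_right_inj, max_comm]

theorem add_eq_max_add_self_iff_of_add_eq {s M x x' : α} (h : x + x' = M) :
    s + x = max M (x + x) ↔ s + x' = max M (x' + x') := by
  rw [add_eq_max_add_self_iff_eq_max h,
    add_eq_max_add_self_iff_eq_max ((add_comm x' x).trans h), max_comm]

theorem nonneg_right_of_eq_max_of_le_add {s x x' : α} (hs : s = max x x')
    (hle : s ≤ x + x') : 0 ≤ x' := by
  rw [← min_add_max x x', hs, le_add_iff_nonneg_left] at hle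
  exact hle.trans (min_le_right x x')

end TropicalFricke

theorem tropical_fricke_relation_preserved_general (a b c₃ c c₃' : ℝ)
    (hfricke : a + b + c₃ = max (max (max (2 * a) (2 * b)) (2 * c₃)) c)
    (hc₃' : c₃ + c₃' = max (max (2 * a) (2 * b)) c) :
    0 ≤ c₃' ∧ a + b + c₃' = max (max (max (2 * a) (2 * b)) (2 * c₃')) c := by
  have hab : a + b ≤ c₃ + c₃' := by
    rw [hc₃']
    linarith [le_max_left (2 * a) (2 * b), le_max_right (2 * a) (2 * b),
      le_max_left (max (2 * a) (2 * b)) c]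
  have hrel : a + b + c₃ = max (max (max (2 * a) (2 * b)) c) (c₃ + c₃) := by
    rw [hfricke, max_right_comm, two_mul c₃]
  have hmax : a + b = max c₃ c₃' := (add_eq_max_add_self_iff_eq_max hc₃').1 hrel
  refine ⟨nonneg_right_of_eq_max_of_le_add hmax hab, ?_⟩
  rw [max_right_comm, two_mul c₃']
  exact (add_eq_max_add_self_iff_of_add_eq hc₃').1 hrel

theorem tropical_fricke_relation_preserved (a b c₃ c c₃' : ℝ)
    (ha : 0 ≤ a) (hb : 0 ≤ b) (hc₃ : 0 ≤ c₃) (hc : 0 ≤ c)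
    (hfricke : a + b + c₃ = max (max (max (2 * a) (2 * b)) (2 * c₃)) c)
    (hc₃' : c₃ + c₃' = max (max (2 * a) (2 * b)) c) :
    0 ≤ c₃' ∧ a + b + c₃' = max (max (max (2 * a) (2 * b)) (2 * c₃')) c :=
  tropical_fricke_relation_preserved_general a b c₃ c c₃' hfricke hc₃'
end
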